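/- arXiv:math/0411180 — 7 statements merged into one kernel-verified Lean document; each statement's English description precedes it below -/
import Mathlib

section
/- Let (n_k)_{k ∈ ℤ} be a non-decreasing variable-r meta-Fibonacci sequence with n_k = 1 for all k ≤ 0. Suppose that every cascade has length at most J, i.e., there is no index k ≥ 1 with n_k = n_{k+1} = ... = n_{k+J}. Then n_k ≥ 2^{⌊k/(J+2)⌋} for every k ≥ 1. -/
/-!
Since no cascade is longer than `J`, for every `k ≥ 0` the sequence strictly increases at some `m` with
`k + 2 ≤ m ≤ k + J + 2`. A strict increase at `m` forces `r m ≥ 2`, so that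
`n m ≥ n (m - 1) + n (m - 2) ≥ 2 n k` by monotonicity. Hence `n` at least doubles over every
`J + 2` consecutive indices, starting from `n 0 = 1`.
-/

theorem Int.exists_lt_sub_one_of_lt {α : Type*} [LinearOrder α] {f : ℤ → α} {a b : ℤ}
    (hab : a ≤ b) (h : f a < f b) : ∃ m, a < m ∧ m ≤ b ∧ f (m - 1) < f m := by
  induction b, hab using Int.leInduction with
  | base => exact absurd h (lt_irrefl _)
  | succ b hab ih =>
    rcases lt_or_ge (f a) (f b) with hb | hb
    · obtain ⟨m, ham, hmb, hm⟩ := ih hb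
      exact ⟨m, ham, by omega, hm⟩
    · exact ⟨b + 1, by omega, le_rfl, by simpa using hb.trans_lt h⟩

section MetaFibonacci

variable {n r : ℤ → ℤ}

theorem add_le_of_sub_one_lt (hr : ∀ k, 1 ≤ r k)
    (hrec : ∀ k : ℤ, n k = ∑ j ∈ Finset.Icc (1 : ℤ) (r k), n (k - j))
    (hpos : ∀ k, 0 ≤ n k) {m : ℤ} (hm : n (m - 1) < n m) :
    n (m - 1) + n (m - 2) ≤ n m := by
  have hr2 : 2 ≤ r m := by
    by_contra! h
    have hr1 : r m = 1 := by linarith [hr m]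
    simp [hrec m, hr1] at hm
  calc n (m - 1) + n (m - 2) = ∑ j ∈ Finset.Icc (1 : ℤ) 2, n (m - j) := by
        rw [show Finset.Icc (1 : ℤ) 2 = {1, 2} by rfl, Finset.sum_pair (by norm_num)]
    _ ≤ ∑ j ∈ Finset.Icc (1 : ℤ) (r m), n (m - j) :=
        Finset.sum_le_sum_of_subset_of_nonneg (Finset.Icc_subset_Icc le_rfl hr2)
          fun j _ _ => hpos _
    _ = n m := (hrec m).symm

theorem two_mul_le_add_of_no_cascade (hr : ∀ k, 1 ≤ r k)
    (hrec : ∀ k : ℤ, n k = ∑ j ∈ Finset.Icc (1 : ℤ) (r k), n (k - j))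
    (hn : Monotone n) (hpos : ∀ k, 0 ≤ n k) {J : ℤ}
    (hcasc : ¬ ∃ k ≥ (1 : ℤ), ∀ i : ℤ, 0 ≤ i → i ≤ J → n (k + i) = n k)
    {k : ℤ} (hk : 0 ≤ k) : 2 * n k ≤ n (k + (J + 2)) := by
  push Not at hcasc
  obtain ⟨i, hi0, hiJ, hne⟩ := hcasc (k + 1) (by omega)
  obtain ⟨m, hkm, hmi, hm⟩ := Int.exists_lt_sub_one_of_lt (f := n) (by omega : k + 1 ≤ k + 1 + i)
    ((hn (by omega)).lt_of_ne' hne)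
  have hsum := add_le_of_sub_one_lt hr hrec hpos hm
  have h1 : n k ≤ n (m - 1) := hn (by omega)
  have h2 : n k ≤ n (m - 2) := hn (by omega)
  have h3 : n m ≤ n (k + (J + 2)) := hn (by omega)
  linarith

end MetaFibonacci

theorem two_pow_le_of_two_mul_le_add {n : ℤ → ℤ} {p : ℤ} (hp : 0 ≤ p) (h0 : n 0 = 1)
    (hdouble : ∀ k, 0 ≤ k → 2 * n k ≤ n (k + p)) (q : ℕ) : 2 ^ q ≤ n (q * p) := by
  induction q with
  | zero => simp [h0]
  | succ q ih =>
    calc (2 : ℤ) ^ (q + 1) = 2 * 2 ^ q := by ring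
      _ ≤ 2 * n (q * p) := by linarith
      _ ≤ n (q * p + p) := hdouble _ (by positivity)
      _ = n ((q + 1 : ℕ) * p) := by push_cast; ring_nf

/-- For a non-decreasing variable-r meta-Fibonacci sequence with
`n k = 1` for `k ≤ 0`, if there is no `k ≥ 1` with `n k = n (k+1) = ... = n (k+J)`
(every cascade has length at most `J`), then `n k ≥ 2 ^ ⌊k/(J+2)⌋` for every `k ≥ 1`. -/
theorem stmt_4 (n : ℤ → ℤ) (r : ℤ → ℤ)
    (hr : ∀ k, 1 ≤ r k)
    (hrec : ∀ k : ℤ, n k = ∑ j ∈ Finset.Icc (1 : ℤ) (r k), n (k - j))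
    (hmono : ∀ k : ℤ, n (k - 1) ≤ n k)
    (hinit : ∀ k ≤ (0 : ℤ), n k = 1)
    (J : ℤ) (hJ : 1 ≤ J)
    (hcasc : ¬ ∃ k ≥ (1 : ℤ), ∀ i : ℤ, 0 ≤ i → i ≤ J → n (k + i) = n k) :
    ∀ k ≥ (1 : ℤ), 2 ^ (k / (J + 2)).toNat ≤ n k := by
  have hn : Monotone n := monotone_int_of_le_succ fun k => by simpa using hmono (k + 1)
  have hpos : ∀ k, 0 ≤ n k := fun k => by
    linarith [hinit (min k 0) (min_le_right _ _), hn (min_le_left k 0)]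
  have hdouble := fun k (hk : 0 ≤ k) => two_mul_le_add_of_no_cascade hr hrec hn hpos hcasc hk
  intro k hk
  have hq : 0 ≤ k / (J + 2) := Int.ediv_nonneg (by omega) (by omega)
  calc 2 ^ (k / (J + 2)).toNat ≤ n ((k / (J + 2)).toNat * (J + 2)) :=
        two_pow_le_of_two_mul_le_add (by omega) (hinit 0 le_rfl) hdouble _
    _ ≤ n k := hn (by rw [Int.toNat_of_nonneg hq]; exact Int.ediv_mul_le k (by omega))
end

section
/- Define r : ℤ → ℤ⁺ by r(k) = 2 if k ≥ 2 and k is a power of 2, and r(k) = 1 otherwise (for k ≥ 1), with r(k) = 1 for k ≤ 0. Let (n_k) be the variable-r meta-Fibonacci sequence generated by r with n_k = 1 for k ≤ 0. Then k/2 < n_k ≤ k for all k ≥ 1. -/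
/-!
Since `k = 2 ^ m ≥ 2` is even, `k - 1` is never such a power, so at `k = 2 ^ m` the recurrence reads
`n k = n (k - 1) + n (k - 2) = 2 * n (k - 1)`, and everywhere else `n k = n (k - 1)`.
Hence `n k = 2 ^ ⌊log₂ k⌋` for `k ≥ 0`, and `2 ^ ⌊log₂ k⌋ ≤ k < 2 ^ (⌊log₂ k⌋ + 1)` gives the bounds.
-/

theorem Nat.log_pow_sub_one {b : ℕ} (hb : 1 < b) (m : ℕ) : Nat.log b (b ^ m - 1) = m - 1 := by
  rcases m with _ | m
  · simp
  have hpow : b ^ m < b ^ (m + 1) := Nat.pow_lt_pow_right hb (Nat.lt_succ_self m)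
  refine Nat.log_eq_of_pow_le_of_lt_pow ?_ ?_ <;> rw [Nat.add_sub_cancel] <;> omega

theorem Nat.log_add_one_of_ne_pow {b N : ℕ} (hb : 1 < b) (h : ∀ m ≠ 0, N + 1 ≠ b ^ m) :
    Nat.log b (N + 1) = Nat.log b N := by
  rcases eq_or_ne N 0 with rfl | hN
  · simp
  refine ((Nat.log_eq_log_succ_iff hb hN).2 fun hpow => ?_).symm
  by_cases hlog : Nat.log b (N + 1) = 0
  · rw [hlog, pow_zero] at hpow
    omega
  · exact h _ hlog hpow.symm

theorem Int.not_two_pow_sub_one {k : ℤ} (hk : 2 ≤ k ∧ ∃ m : ℕ, k = 2 ^ m) :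
    ¬(2 ≤ k - 1 ∧ ∃ m : ℕ, k - 1 = 2 ^ m) := by
  have even_of_pow (j : ℤ) (hj : 2 ≤ j ∧ ∃ m : ℕ, j = 2 ^ m) : 2 ∣ j := by
    obtain ⟨hj2, m, rfl⟩ := hj
    rcases m with _ | m
    · norm_num at hj2
    · exact dvd_pow_self 2 m.succ_ne_zero
  intro hk'
  have := even_of_pow k hk
  have := even_of_pow (k - 1) hk'
  omega

namespace MetaFibonacci

variable {n r : ℤ → ℤ}
  (hr2 : ∀ k : ℤ, (2 ≤ k ∧ ∃ m : ℕ, k = 2 ^ m) → r k = 2)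
  (hr1 : ∀ k : ℤ, ¬(2 ≤ k ∧ ∃ m : ℕ, k = 2 ^ m) → r k = 1)
  (hrec : ∀ k : ℤ, n k = ∑ j ∈ Finset.Icc (1 : ℤ) (r k), n (k - j))
include hr1 hrec

theorem apply_eq_apply_sub_one {k : ℤ} (hk : ¬(2 ≤ k ∧ ∃ m : ℕ, k = 2 ^ m)) :
    n k = n (k - 1) := by
  rw [hrec k, hr1 k hk]
  simp

include hr2 in
theorem apply_eq_two_mul_apply_sub_one {k : ℤ} (hk : 2 ≤ k ∧ ∃ m : ℕ, k = 2 ^ m) :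
    n k = 2 * n (k - 1) := by
  have hprev : n (k - 1) = n (k - 2) := by
    rw [apply_eq_apply_sub_one hr1 hrec (Int.not_two_pow_sub_one hk)]
    ring_nf
  rw [hrec k, hr2 k hk, show Finset.Icc (1 : ℤ) 2 = {1, 2} by decide, Finset.sum_pair (by norm_num),
    ← hprev]
  ring

include hr2 in
theorem apply_natCast_eq_two_pow_log (hinit : ∀ k ≤ (0 : ℤ), n k = 1) (N : ℕ) :
    n N = 2 ^ Nat.log 2 N := by
  induction N with
  | zero => simpa using hinit 0 le_rfl
  | succ N ih =>
    have hsub : ((N + 1 : ℕ) : ℤ) - 1 = N := by push_cast; ring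
    by_cases hpow : 2 ≤ ((N + 1 : ℕ) : ℤ) ∧ ∃ m : ℕ, ((N + 1 : ℕ) : ℤ) = 2 ^ m
    · obtain ⟨h2, m, hm⟩ := hpow
      have hm : N + 1 = 2 ^ m := by exact_mod_cast hm
      rcases m with _ | m
      · omega
      have hlog : Nat.log 2 N = m := by
        simpa [show N = 2 ^ (m + 1) - 1 by omega] using Nat.log_pow_sub_one one_lt_two (m + 1)
      rw [apply_eq_two_mul_apply_sub_one hr2 hr1 hrec ⟨h2, m + 1, by exact_mod_cast hm⟩, hsub, ih,
        hlog, hm, Nat.log_pow one_lt_two]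
      ring
    · have hlog : Nat.log 2 (N + 1) = Nat.log 2 N := by
        refine Nat.log_add_one_of_ne_pow one_lt_two fun m hm0 hm => hpow ⟨?_, m, by exact_mod_cast hm⟩
        have := Nat.one_lt_two_pow hm0
        push_cast; omega
      rw [apply_eq_apply_sub_one hr1 hrec hpow, hsub, ih, hlog]

end MetaFibonacci

/-- With `r k = 2` when `k ≥ 2` is a power of 2 and `r k = 1` otherwise,
the variable-r meta-Fibonacci sequence with `n k = 1` for `k ≤ 0` satisfies
`k/2 < n k ≤ k` for all `k ≥ 1`. -/
theorem stmt_5 (n : ℤ → ℤ) (r : ℤ → ℤ)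
    (hr2 : ∀ k : ℤ, (2 ≤ k ∧ ∃ m : ℕ, k = 2 ^ m) → r k = 2)
    (hr1 : ∀ k : ℤ, ¬(2 ≤ k ∧ ∃ m : ℕ, k = 2 ^ m) → r k = 1)
    (hrec : ∀ k : ℤ, n k = ∑ j ∈ Finset.Icc (1 : ℤ) (r k), n (k - j))
    (hinit : ∀ k ≤ (0 : ℤ), n k = 1) :
    ∀ k ≥ (1 : ℤ), k < 2 * n k ∧ n k ≤ k := by
  intro k hk
  lift k to ℕ using by omega
  rw [MetaFibonacci.apply_natCast_eq_two_pow_log hr2 hr1 hrec hinit k]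
  have hle : 2 ^ Nat.log 2 k ≤ k := Nat.pow_log_le_self 2 (by omega)
  have hlt : k < 2 * 2 ^ Nat.log 2 k := by
    simpa [pow_succ, mul_comm] using Nat.lt_pow_succ_log_self one_lt_two k
  exact ⟨by exact_mod_cast hlt, by exact_mod_cast hle⟩
end

section
/- Define r : ℤ → ℤ⁺ by r(k) = 2^{k-1} for k ≥ 1 and r(k) = 1 for k ≤ 0. Let (n_k) be the variable-r meta-Fibonacci sequence with n_k = 1 for all k ≤ 0. Then 2 < n_k / n_{k-1} < 3 for every k ≥ 3. -/
/-!
For `k ≥ 2` the window of `n k` is twice as long as that of `n (k - 1)`, so it splits into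
`n (k - 1)`, the whole window of `n (k - 1)` (which sums to `n (k - 1)`), and `2 ^ (k - 2) - 1`
initial values equal to `1`. Hence `n k = 2 n (k - 1) + 2 ^ (k - 2) - 1`, and with
`n (k - 1) ≥ 2 ^ (k - 2) ≥ 2` this puts `n k` strictly between `2 n (k - 1)` and `3 n (k - 1)`.
-/

open Finset

theorem Finset.sum_Icc_one_natCast {M : Type*} [AddCommMonoid M] (g : ℤ → M) (R : ℕ) :
    ∑ j ∈ Icc (1 : ℤ) R, g j = ∑ i ∈ range R, g (i + 1) := by
  induction R with
  | zero => simp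
  | succ R ih =>
    rw [sum_range_succ, ← ih, Nat.cast_succ, ← Finset.insert_Icc_right_eq_Icc_add_one (by omega),
      sum_insert (by simp), add_comm]

theorem sum_Icc_one_two_mul {M : Type*} [AddCommMonoid M] (f : ℤ → M) (k : ℤ) {R : ℕ}
    (hR : 1 ≤ R) :
    ∑ j ∈ Icc (1 : ℤ) (2 * R : ℕ), f (k - j) =
      f (k - 1) + ∑ j ∈ Icc (1 : ℤ) R, f (k - 1 - j) + ∑ i ∈ range (R - 1), f (k - R - 2 - i) := by
  have hsplit : 2 * R = (R + 1) + (R - 1) := by omega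
  simp only [sum_Icc_one_natCast]
  rw [hsplit, sum_range_add, sum_range_succ']
  push_cast
  congr 1
  · rw [add_comm]
    congr 1
    refine sum_congr rfl fun i _ => congr_arg f ?_; ring
  · refine sum_congr rfl fun i _ => congr_arg f ?_; ring

section

variable {n : ℤ → ℝ} {r : ℤ → ℤ}

theorem metaFibonacci_one (hr : ∀ k ≥ (1 : ℤ), r k = 2 ^ (k - 1).toNat)
    (hrec : ∀ k : ℤ, n k = ∑ j ∈ Icc (1 : ℤ) (r k), n (k - j))
    (hinit : ∀ k ≤ (0 : ℤ), n k = 1) :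
    n 1 = 1 := by
  rw [hrec, hr 1 le_rfl]
  simpa using hinit 0 le_rfl

theorem metaFibonacci_add_two (hr : ∀ k ≥ (1 : ℤ), r k = 2 ^ (k - 1).toNat)
    (hrec : ∀ k : ℤ, n k = ∑ j ∈ Icc (1 : ℤ) (r k), n (k - j))
    (hinit : ∀ k ≤ (0 : ℤ), n k = 1) (m : ℕ) :
    n (m + 2) = 2 * n (m + 1) + (2 ^ m - 1) := by
  have hr_succ : r (m + 1) = (2 ^ m : ℕ) := by rw [hr _ (by omega)]; simp
  have hr_succ_succ : r (m + 2) = (2 * 2 ^ m : ℕ) := by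
    rw [hr _ (by omega), show ((m : ℤ) + 2 - 1).toNat = m + 1 by omega]; push_cast; ring
  have hprev : ∑ j ∈ Icc (1 : ℤ) (2 ^ m : ℕ), n (m + 2 - 1 - j) = n (m + 1) := by
    rw [hrec (m + 1), hr_succ]
    refine sum_congr rfl fun j _ => congr_arg n ?_; ring
  -- the last `2 ^ m - 1` terms reach back to indices `≤ 0` because `m < 2 ^ m`
  have htail : ∑ i ∈ range (2 ^ m - 1), n (m + 2 - (2 ^ m : ℕ) - 2 - i) = 2 ^ m - 1 := by
    have hm : (m : ℤ) < (2 ^ m : ℕ) := by exact_mod_cast Nat.lt_two_pow_self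
    rw [sum_congr rfl fun i _ => hinit _ (by omega), sum_const, card_range, nsmul_one,
      Nat.cast_sub Nat.one_le_two_pow]
    norm_num
  rw [hrec, hr_succ_succ, sum_Icc_one_two_mul _ _ Nat.one_le_two_pow, hprev, htail,
    show (m : ℤ) + 2 - 1 = m + 1 by ring]
  ring

theorem two_pow_le_metaFibonacci (hr : ∀ k ≥ (1 : ℤ), r k = 2 ^ (k - 1).toNat)
    (hrec : ∀ k : ℤ, n k = ∑ j ∈ Icc (1 : ℤ) (r k), n (k - j))
    (hinit : ∀ k ≤ (0 : ℤ), n k = 1) (m : ℕ) :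
    2 ^ m ≤ n (m + 1) := by
  induction m with
  | zero => simp [metaFibonacci_one hr hrec hinit]
  | succ m ih =>
    have hstep := metaFibonacci_add_two hr hrec hinit m
    have hone : (1 : ℝ) ≤ 2 ^ m := one_le_pow₀ one_le_two
    push_cast
    rw [add_assoc, one_add_one_eq_two, pow_succ]
    linarith

end

theorem stmt_6_general (n : ℤ → ℝ) (r : ℤ → ℤ)
    (hr2 : ∀ k ≥ (1 : ℤ), r k = 2 ^ (k - 1).toNat)
    (hrec : ∀ k : ℤ, n k = ∑ j ∈ Finset.Icc (1 : ℤ) (r k), n (k - j))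
    (hinit : ∀ k ≤ (0 : ℤ), n k = 1) :
    ∀ k ≥ (3 : ℤ), 2 < n k / n (k - 1) ∧ n k / n (k - 1) < 3 := by
  intro k hk
  obtain ⟨m, rfl⟩ : ∃ m : ℕ, k = m + 2 := ⟨(k - 2).toNat, by omega⟩
  have hrec_eq := metaFibonacci_add_two hr2 hrec hinit m
  have hlow := two_pow_le_metaFibonacci hr2 hrec hinit m
  have htwo : (2 : ℝ) ≤ 2 ^ m := le_self_pow₀ one_le_two (by omega)
  rw [show (m : ℤ) + 2 - 1 = m + 1 by ring]
  have hpos : 0 < n (m + 1) := by linarith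
  constructor
  · rw [lt_div_iff₀ hpos]; linarith
  · rw [div_lt_iff₀ hpos]; linarith

/-- With `r k = 2^(k-1)` for `k ≥ 1` and `r k = 1` for `k ≤ 0`, the
variable-r meta-Fibonacci sequence with `n k = 1` for `k ≤ 0` satisfies
`2 < n k / n (k-1) < 3` for every `k ≥ 3`. -/
theorem stmt_6 (n : ℤ → ℝ) (r : ℤ → ℤ)
    (hr2 : ∀ k ≥ (1 : ℤ), r k = 2 ^ (k - 1).toNat)
    (hr1 : ∀ k ≤ (0 : ℤ), r k = 1)
    (hrec : ∀ k : ℤ, n k = ∑ j ∈ Finset.Icc (1 : ℤ) (r k), n (k - j))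
    (hinit : ∀ k ≤ (0 : ℤ), n k = 1) :
    ∀ k ≥ (3 : ℤ), 2 < n k / n (k - 1) ∧ n k / n (k - 1) < 3 :=
  stmt_6_general n r hr2 hrec hinit
end

section
/- Let (T, F) be a tree with dynamics with H ≥ 1 (F(T_l) = T_{l-H}). Let (x_{l(k)})_{k ∈ ℤ} be a return chain of an extended end x with return times (n_k)_{k ∈ ℤ}. Then (n_k) is a non-decreasing sequence: n_{k-1} ≤ n_k for all k. -/
/-- An extended end of a genealogical tree with levels. -/
def IsEnd {V : Type*} (parent : V → V) (level : V → ℤ) (x : ℤ → V) : Prop :=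
  ∀ l : ℤ, level (x l) = l ∧ x (l - 1) = parent (x l)

/-- `F^[n] (x l)` returns to the extended end `x`. -/
def Returns {V : Type*} (F : V → V) (x : ℤ → V) (l : ℤ) (n : ℕ) : Prop :=
  1 ≤ n ∧ ∃ m : ℤ, F^[n] (x l) = x m

/-- `n` is the first return time of `x l` to the extended end `x`. -/
def IsFirstReturnTime {V : Type*} (F : V → V) (x : ℤ → V) (l : ℤ) (n : ℕ) : Prop :=
  Returns F x l n ∧ ∀ n' : ℕ, Returns F x l n' → n ≤ n'

/-- A return chain `(x (l k))` of the extended end `x`, with return times `(n k)`: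
`n k` is the first return time of `x (l k)` and `F^[n k] (x (l k)) = x (l (k-1))`. -/
def IsReturnChain {V : Type*} (F : V → V) (x : ℤ → V) (l : ℤ → ℤ) (n : ℤ → ℕ) : Prop :=
  ∀ k : ℤ, IsFirstReturnTime F x (l k) (n k) ∧ F^[n k] (x (l k)) = x (l (k - 1))

/-!
Going down one level along the end commutes with `F`, so if `F^[n]` brings `x L` back onto the
end at level `M`, it brings every lower point `x (L - d)` back onto the end at level `M - d`.
Hence the first return time of `x l` can only grow with `l`, and a return chain has strictly
increasing levels.
-/

theorem IsEnd.apply_sub_natCast {V : Type*} {parent : V → V} {level : V → ℤ} {x : ℤ → V}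
    (hx : IsEnd parent level x) (L : ℤ) (d : ℕ) : x (L - d) = parent^[d] (x L) := by
  induction d with
  | zero => simp
  | succ d ih =>
    rw [Nat.cast_succ, ← sub_sub, (hx _).2, ih, Function.iterate_succ_apply']

theorem Returns.of_le {V : Type*} {parent : V → V} {level : V → ℤ} {F : V → V}
    (hF : Function.Commute F parent) {x : ℤ → V} (hx : IsEnd parent level x)
    {L L' : ℤ} {n : ℕ} (h : Returns F x L n) (hL : L' ≤ L) : Returns F x L' n := by
  obtain ⟨hn, M, hM⟩ := h
  obtain ⟨d, rfl⟩ : ∃ d : ℕ, L' = L - d := ⟨(L - L').toNat, by omega⟩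
  refine ⟨hn, M - d, ?_⟩
  rw [hx.apply_sub_natCast, hx.apply_sub_natCast, (hF.iterate_iterate n d).eq, hM]

theorem IsFirstReturnTime.le_of_le {V : Type*} {parent : V → V} {level : V → ℤ} {F : V → V}
    (hF : Function.Commute F parent) {x : ℤ → V} (hx : IsEnd parent level x)
    {L L' : ℤ} {n n' : ℕ} (h : IsFirstReturnTime F x L n)
    (h' : IsFirstReturnTime F x L' n') (hL : L' ≤ L) : n' ≤ n :=
  h'.2 n (h.1.of_le hF hx hL)

theorem stmt_9_general (V : Type*) (parent : V → V) (level : V → ℤ)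
    (F : V → V) (hF : ∀ v, F (parent v) = parent (F v))
    (x : ℤ → V) (hx : IsEnd parent level x)
    (l : ℤ → ℤ) (hl : StrictMono l) (n : ℤ → ℕ)
    (hchain : IsReturnChain F x l n) :
    ∀ k : ℤ, n (k - 1) ≤ n k := fun k =>
  (hchain k).1.le_of_le hF hx (hchain (k - 1)).1 (hl.monotone (by omega))

/-- Return times of a return chain are non-decreasing. -/
theorem stmt_9 (V : Type*) (parent : V → V) (level : V → ℤ)
    (hpl : ∀ v, level (parent v) = level v - 1)
    (F : V → V) (hF : ∀ v, F (parent v) = parent (F v))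
    (H : ℤ) (hH : 1 ≤ H) (hFlev : ∀ v, level (F v) = level v - H)
    (x : ℤ → V) (hx : IsEnd parent level x)
    (l : ℤ → ℤ) (hl : StrictMono l) (n : ℤ → ℕ)
    (hchain : IsReturnChain F x l n) :
    ∀ k : ℤ, n (k - 1) ≤ n k :=
  stmt_9_general V parent level F hF x hx l hl n hchain
end

section
/- Let (T, F) be a tree with dynamics with H ≥ 1. Let (x_{l(k)})_{k ∈ ℤ} be a return chain of an extended end x, with return times (n_k)_{k ∈ ℤ}. Then (n_k) is an extended variable-r meta-Fibonacci sequence: for every k ∈ ℤ there exists r(k) ≥ 1 such that n_k = n_{k-1} + n_{k-2} + ... + n_{k-r(k)}. -/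
/-!
Since `F` commutes with `parent`, if `F^[m]` maps `x a` to `x b` with `b ≤ a`, it maps the
ancestor `x b` of `x a` to `x (b - (a - b))`, so `m` is also a return time of `x b`. As `F`
lowers levels, this applies to the first return `x (l (k-1))` of `x (l k)`: `n k` is a
return time of `x (l (k-1))`. On the other hand, a return time `m` of `x (l a)` is at least
`n a`, and `m - n a` is a return time of `x (l (a-1))`; peeling off first return times
writes `m` as `n a + n (a-1) + ⋯ + n (b+1)`. For `m = n k` and `a = k - 1` this is the
recursion.
-/

open Finset

section ReturnTimes

variable {V : Type*} {parent F : V → V} {level : V → ℤ} {x : ℤ → V}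

namespace IsEnd

lemma iterate_parent (hx : IsEnd parent level x) (d : ℕ) (a : ℤ) :
    parent^[d] (x a) = x (a - d) := by
  induction d generalizing a with
  | zero => simp
  | succ d ih =>
    rw [Function.iterate_succ_apply, ← (hx a).2, ih]
    congr 1
    push_cast
    ring

lemma eq_iterate_parent_of_le (hx : IsEnd parent level x) {a b : ℤ} (hba : b ≤ a) :
    x b = parent^[(a - b).toNat] (x a) := by
  rw [hx.iterate_parent, Int.toNat_of_nonneg (by omega), sub_sub_cancel]

lemma returns_of_iterate_eq (hx : IsEnd parent level x) (hF : Function.Commute F parent)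
    {a b : ℤ} {m : ℕ} (hm : 1 ≤ m) (hba : b ≤ a) (h : F^[m] (x a) = x b) :
    Returns F x b m := by
  refine ⟨hm, b - (a - b).toNat, ?_⟩
  rw [hx.eq_iterate_parent_of_le hba, ((hF.iterate_right _).iterate_left m).eq, h,
    hx.iterate_parent]

end IsEnd

lemma level_iterate {H : ℤ} (hFlev : ∀ v, level (F v) = level v - H) (m : ℕ) (v : V) :
    level (F^[m] v) = level v - m * H := by
  induction m with
  | zero => simp
  | succ m ih =>
    rw [Function.iterate_succ_apply', hFlev, ih]
    push_cast
    ring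

namespace IsReturnChain

variable {l : ℤ → ℤ} {n : ℤ → ℕ}

lemma returns_sub (hchain : IsReturnChain F x l n) {a : ℤ} {m : ℕ}
    (hm : Returns F x (l a) m) (hlt : n a < m) :
    Returns F x (l (a - 1)) (m - n a) := by
  obtain ⟨-, c, hc⟩ := hm
  refine ⟨by omega, c, ?_⟩
  rw [← (hchain a).2, ← Function.iterate_add_apply, Nat.sub_add_cancel hlt.le, hc]

lemma eq_sum_Ioc_of_returns (hchain : IsReturnChain F x l n) {m : ℕ} :
    ∀ {a : ℤ}, Returns F x (l a) m → ∃ b < a, m = ∑ j ∈ Ioc b a, n j := by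
  induction m using Nat.strong_induction_on with
  | _ m ih =>
    intro a hm
    rcases ((hchain a).1.2 m hm).eq_or_lt with heq | hlt
    · exact ⟨a - 1, by omega, by simp [Ioc_sub_one_left_eq_Icc, heq]⟩
    · have hpos := (hchain a).1.1.1
      obtain ⟨b, hb, hsum⟩ := ih (m - n a) (by omega) (hchain.returns_sub hm hlt)
      refine ⟨b, by omega, ?_⟩
      rw [← insert_Ioc_sub_one_right_eq_Ioc (by omega : b < a),
        sum_insert (by simp), ← hsum]
      omega

end IsReturnChain

end ReturnTimes

theorem stmt_10_general (V : Type*) (parent : V → V) (level : V → ℤ)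
    (F : V → V) (hF : ∀ v, F (parent v) = parent (F v))
    (H : ℤ) (hH : 1 ≤ H) (hFlev : ∀ v, level (F v) = level v - H)
    (x : ℤ → V) (hx : IsEnd parent level x)
    (l : ℤ → ℤ) (n : ℤ → ℕ)
    (hchain : IsReturnChain F x l n) :
    ∀ k : ℤ, ∃ r : ℤ, 1 ≤ r ∧
      (n k : ℤ) = ∑ j ∈ Finset.Icc (1 : ℤ) r, (n (k - j) : ℤ) := by
  intro k
  obtain ⟨⟨⟨hn, -⟩, -⟩, hland⟩ := hchain k
  have hle : l (k - 1) ≤ l k := by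
    have hlev := level_iterate hFlev (n k) (x (l k))
    rw [hland, (hx _).1, (hx _).1] at hlev
    nlinarith
  obtain ⟨b, hb, hsum⟩ :=
    hchain.eq_sum_Ioc_of_returns (hx.returns_of_iterate_eq hF hn hle hland)
  refine ⟨k - 1 - b, by omega, ?_⟩
  rw [hsum, Nat.cast_sum]
  refine sum_nbij' (k - ·) (k - ·) ?_ ?_ (by simp) (by simp) (by simp) <;>
    · intro j hj
      simp only [mem_Ioc, mem_Icc] at hj ⊢
      omega

/-- The return times of any return chain form an extended variable-r
meta-Fibonacci sequence: for every `k` there is `r k ≥ 1` with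
`n k = n (k-1) + ... + n (k - r k)`. -/
theorem stmt_10 (V : Type*) (parent : V → V) (level : V → ℤ)
    (hpl : ∀ v, level (parent v) = level v - 1)
    (F : V → V) (hF : ∀ v, F (parent v) = parent (F v))
    (H : ℤ) (hH : 1 ≤ H) (hFlev : ∀ v, level (F v) = level v - H)
    (x : ℤ → V) (hx : IsEnd parent level x)
    (l : ℤ → ℤ) (n : ℤ → ℕ)
    (hchain : IsReturnChain F x l n) :
    ∀ k : ℤ, ∃ r : ℤ, 1 ≤ r ∧
      (n k : ℤ) = ∑ j ∈ Finset.Icc (1 : ℤ) r, (n (k - j) : ℤ) :=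
  stmt_10_general V parent level F hF H hH hFlev x hx l n hchain
end

section
/- Let (T, F) be a tree with dynamics with H ≥ 1, and let x = (x_l)_{l ∈ ℤ} be an extended end that is recurrent under F, meaning: for every L ∈ ℤ there exist K ∈ ℤ and N ≥ 1 with F^N(x_K) = x_L. Then for every L ∈ ℤ there exists M ∈ ℤ such that x_L is the first return of x_M, i.e., the first return time n of x_M satisfies F^n(x_M) = x_L. -/
/-! Among all ways of reaching `x L` from a vertex of the end by `N ≥ 1` iterates of `F`, take
one with `N` minimal, say from `x M`. An earlier return `F^[n'] (x M) = x m` with `n' < N` would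
reach `x L` from `x m` in `N - n'` steps, so `N` is the first return time of `x M`. -/

theorem exists_isFirstReturnTime_iterate_eq {V : Type*} {F : V → V} {x : ℤ → V} {L : ℤ}
    (h : ∃ N : ℕ, 1 ≤ N ∧ ∃ K : ℤ, F^[N] (x K) = x L) :
    ∃ M : ℤ, ∃ n : ℕ, IsFirstReturnTime F x M n ∧ F^[n] (x M) = x L := by
  classical
  obtain ⟨hN, M, hM⟩ := Nat.find_spec h
  refine ⟨M, Nat.find h, ⟨⟨hN, L, hM⟩, fun n' ⟨hn', m, hm⟩ => ?_⟩, hM⟩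
  by_contra! hlt
  have hm_reaches : F^[Nat.find h - n'] (x m) = x L := by
    rw [← hm, ← Function.iterate_add_apply, Nat.sub_add_cancel hlt.le, hM]
  exact Nat.find_min h (by omega) ⟨by omega, m, hm_reaches⟩

theorem stmt_11_general (V : Type*) (F : V → V) (x : ℤ → V)
    (hrec : ∀ L : ℤ, ∃ K : ℤ, ∃ N : ℕ, 1 ≤ N ∧ F^[N] (x K) = x L) :
    ∀ L : ℤ, ∃ M : ℤ, ∃ n : ℕ, IsFirstReturnTime F x M n ∧ F^[n] (x M) = x L := by
  intro L
  obtain ⟨K, N, hN, hKN⟩ := hrec L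
  exact exists_isFirstReturnTime_iterate_eq ⟨N, hN, K, hKN⟩

/-- If the extended end `x` is recurrent under `F`, then every vertex
`x L` of the end is the first return of some vertex `x M` of the end. -/
theorem stmt_11 (V : Type*) (parent : V → V) (level : V → ℤ)
    (hpl : ∀ v, level (parent v) = level v - 1)
    (F : V → V) (hF : ∀ v, F (parent v) = parent (F v))
    (H : ℤ) (hH : 1 ≤ H) (hFlev : ∀ v, level (F v) = level v - H)
    (x : ℤ → V) (hx : IsEnd parent level x)
    (hrec : ∀ L : ℤ, ∃ K : ℤ, ∃ N : ℕ, 1 ≤ N ∧ F^[N] (x K) = x L) :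
    ∀ L : ℤ, ∃ M : ℤ, ∃ n : ℕ, IsFirstReturnTime F x M n ∧ F^[n] (x M) = x L :=
  stmt_11_general V F x hrec
end

section
/- Fix a positive integer J. Define r : ℤ → ℤ⁺ by r(k) = 2 if k ≥ 1 and k ≡ 0 (mod J+2), and r(k) = 1 otherwise. Let (n_k)_{k ∈ ℤ} be the variable-r meta-Fibonacci sequence generated by r with n_k = 1 for k ≤ 0. Then for k ≥ 1, n_k = 2^{k/(J+2)} when (J+2) divides k, and n_k = n_{k-1} otherwise; in particular n_k = 2^{⌊k/(J+2)⌋} for all k ≥ 0, showing the lower bound n_k ≥ 2^{⌊k/(J+2)⌋} is sharp. -/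
/-!
Both `n` and `k ↦ 2 ^ max 0 ⌊k / (J + 2)⌋` satisfy the recursion for `k ≥ 1` and equal `1` for
`k ≤ 0`, so they coincide. Off the multiples of `m = J + 2` the closed form is constant from
`k - 1` to `k`; at a multiple `k` of `m`, since `m ≥ 2` both `k - 1` and `k - 2` lie in the
previous block, so the two summands are equal and their sum doubles the closed form.
-/

open Finset

theorem eq_of_forall_eq_sum_Icc_of_eqOn_nonpos {r n n' : ℤ → ℤ}
    (hn : ∀ k, 1 ≤ k → n k = ∑ j ∈ Icc 1 (r k), n (k - j))
    (hn' : ∀ k, 1 ≤ k → n' k = ∑ j ∈ Icc 1 (r k), n' (k - j))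
    (h₀ : ∀ k ≤ 0, n k = n' k) : n = n' := by
  suffices h : ∀ N : ℕ, ∀ k < (N : ℤ), n k = n' k from
    funext fun k => h (k.toNat + 1) k (by omega)
  intro N
  induction N with
  | zero => exact fun k hk => h₀ k (by omega)
  | succ N ih =>
    intro k hk
    rcases le_or_gt k 0 with hk₀ | hk₁
    · exact h₀ k hk₀
    · rw [hn k hk₁, hn' k hk₁]
      refine sum_congr rfl fun j hj => ih _ ?_
      have := (mem_Icc.mp hj).1
      omega

theorem sum_Icc_one_two {M : Type*} [AddCommMonoid M] (g : ℤ → M) :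
    ∑ j ∈ Icc (1 : ℤ) 2, g j = g 1 + g 2 := by
  rw [show Icc (1 : ℤ) 2 = {1, 2} by rfl, sum_pair (by norm_num)]

namespace Int

theorem sub_one_ediv_of_not_dvd {m k : ℤ} (hm : 0 < m) (hk : ¬m ∣ k) :
    (k - 1) / m = k / m := by
  have hr : k % m ≠ 0 := fun h => hk (dvd_of_emod_eq_zero h)
  have := emod_lt_of_pos k hm
  have := emod_nonneg k hm.ne'
  have := ediv_mul_add_emod k m
  rw [ediv_eq_iff_of_pos hm]
  omega

theorem sub_ediv_of_dvd_of_pos_of_le {m k t : ℤ} (hk : m ∣ k) (ht : 0 < t) (htm : t ≤ m) :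
    (k - t) / m = k / m - 1 := by
  obtain ⟨q, rfl⟩ := hk
  rw [mul_ediv_cancel_left q (by omega), ediv_eq_iff_of_pos (by omega)]
  constructor <;> nlinarith

end Int

section ClosedForm

variable {m : ℤ}

theorem two_pow_toNat_ediv_of_nonpos (hm : 0 < m) {k : ℤ} (hk : k ≤ 0) :
    (2 : ℤ) ^ (k / m).toNat = 1 := by
  rw [Int.toNat_of_nonpos (Int.ediv_nonpos_of_nonpos_of_neg hk hm), pow_zero]

theorem two_pow_toNat_ediv_of_dvd (hm : 2 ≤ m) {k : ℤ} (hk : 1 ≤ k) (hd : m ∣ k) :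
    (2 : ℤ) ^ (k / m).toNat = 2 ^ ((k - 1) / m).toNat + 2 ^ ((k - 2) / m).toNat := by
  have hq : 1 ≤ k / m := by
    obtain ⟨q, rfl⟩ := hd
    rw [Int.mul_ediv_cancel_left q (by omega)]
    nlinarith
  rw [Int.sub_ediv_of_dvd_of_pos_of_le hd one_pos (by omega),
    Int.sub_ediv_of_dvd_of_pos_of_le hd two_pos hm,
    show (k / m).toNat = (k / m - 1).toNat + 1 by omega, pow_succ]
  ring

end ClosedForm

/-- With `r k = 2` when `k ≥ 1` and `(J+2) ∣ k`, and `r k = 1` otherwise,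
the variable-r meta-Fibonacci sequence with `n k = 1` for `k ≤ 0` satisfies:
for `k ≥ 1`, `n k = 2^(k/(J+2))` when `(J+2) ∣ k` and `n k = n (k-1)` otherwise;
in particular `n k = 2^⌊k/(J+2)⌋` for all `k ≥ 0`. -/
theorem stmt_19 (J : ℤ) (hJ : 1 ≤ J) (n : ℤ → ℤ) (r : ℤ → ℤ)
    (hr2 : ∀ k : ℤ, 1 ≤ k → (J + 2) ∣ k → r k = 2)
    (hr1 : ∀ k : ℤ, ¬(1 ≤ k ∧ (J + 2) ∣ k) → r k = 1)
    (hrec : ∀ k : ℤ, n k = ∑ j ∈ Finset.Icc (1 : ℤ) (r k), n (k - j))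
    (hinit : ∀ k ≤ (0 : ℤ), n k = 1) :
    (∀ k ≥ (1 : ℤ), ((J + 2) ∣ k → n k = 2 ^ (k / (J + 2)).toNat) ∧
      (¬(J + 2) ∣ k → n k = n (k - 1))) ∧
    ∀ k ≥ (0 : ℤ), n k = 2 ^ (k / (J + 2)).toNat := by
  have hm : 2 ≤ J + 2 := by omega
  have hclosed : ∀ k, n k = 2 ^ (k / (J + 2)).toNat := by
    refine congrFun (eq_of_forall_eq_sum_Icc_of_eqOn_nonpos (r := r) (fun k _ => hrec k)
      (fun k hk => ?_) fun k hk => ?_)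
    · by_cases hd : J + 2 ∣ k
      · rw [hr2 k hk hd, sum_Icc_one_two, two_pow_toNat_ediv_of_dvd hm hk hd]
      · rw [hr1 k (fun h => hd h.2), Icc_self, sum_singleton,
          Int.sub_one_ediv_of_not_dvd (by omega) hd]
    · rw [hinit k hk, two_pow_toNat_ediv_of_nonpos (by omega) hk]
  refine ⟨fun k _ => ⟨fun _ => hclosed k, fun hd => ?_⟩, fun k _ => hclosed k⟩
  rw [hclosed, hclosed, Int.sub_one_ediv_of_not_dvd (by omega) hd]
end
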